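/- For every merge tree T there exists a path P and a discrete Morse function f on P, all of whose cells are critical, such that the induced merge tree M(P,f) is isomorphic to T; indeed both the induced index-ordered dMf and the induced sublevel-connected dMf on the path with i(T) 1-simplices realize T. -/

import Mathlib

/-- Chirality: left or right. -/
inductive Chir : Type
  | L : Chir
  | R : Chir
  deriving DecidableEq

/-- The opposite chirality. -/
def Chir.other : Chir → Chir
  | .L => .R
  | .R => .L

/-- A merge tree: a full rooted chiral binary tree, encoded by the set of its nodes,
each node being the list of chiralities along the shortest path from the root to it
(the root is the empty list). -/
structure MergeTree : Type where
  nodes : Finset (List Chir)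
  root_mem : [] ∈ nodes
  prefix_closed : ∀ (w : List Chir) (x : Chir), w ++ [x] ∈ nodes → w ∈ nodes
  full : ∀ w : List Chir, w ++ [Chir.L] ∈ nodes ↔ w ++ [Chir.R] ∈ nodes

/-- An inner node: a node with (two) children. -/
def MergeTree.IsInner (T : MergeTree) (n : List Chir) : Prop :=
  n ∈ T.nodes ∧ n ++ [Chir.L] ∈ T.nodes

/-- A leaf node: a node without children. -/
def MergeTree.IsLeaf (T : MergeTree) (n : List Chir) : Prop :=
  n ∈ T.nodes ∧ n ++ [Chir.L] ∉ T.nodes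

/-- The chirality of a node (the root has chirality `L` by convention). -/
def chir (n : List Chir) : Chir := n.getLast?.getD Chir.L

/-- The number of inner nodes of a merge tree. -/
def MergeTree.innerCount (T : MergeTree) : ℕ :=
  (T.nodes.filter fun n => n ++ [Chir.L] ∈ T.nodes).card

/-- Auxiliary comparison of path words; the first argument is the letter at the last
position where the two words agreed (cf. "a_k = b_k"): under a common `L`, the letter
`L` precedes `R`; under a common `R`, `R` precedes `L`; shorter words are larger. -/
def leAux : Chir → List Chir → List Chir → Prop
  | _, _, [] => True
  | _, [], _ :: _ => False
  | last, x :: a, y :: b => if x = y then leAux x a b else x = last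

/-- The sublevel-connected Morse order (comparison of path words; every path word
starts with the letter `L` for the root). -/
def scLe (a b : List Chir) : Prop := leAux Chir.L a b

/-- The index Morse order: leaves below inner nodes; among leaves and among inner
nodes, compare path words. -/
def ioLe (T : MergeTree) (a b : List Chir) : Prop :=
  (T.IsLeaf a ∧ T.IsInner b) ∨
    (((T.IsLeaf a ∧ T.IsLeaf b) ∨ (T.IsInner a ∧ T.IsInner b)) ∧ scLe a b)

/-- The simplex order on the nodes of a merge tree. -/
def simpLe (a b : List Chir) : Prop :=
  a = b ∨ (b ++ [Chir.L]) <+: a ∨ (a ++ [Chir.R]) <+: b ∨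
    ∃ p : List Chir, (p ++ [Chir.L]) <+: a ∧ (p ++ [Chir.R]) <+: b

/-- A Morse order on a merge tree: a total order on the nodes that attains its maximum
at the root of each subtree and its minimum inside the child-subtree matching the
chirality of the root of the subtree. -/
def IsMorseOrder (T : MergeTree) (r : List Chir → List Chir → Prop) : Prop :=
  (∀ a ∈ T.nodes, r a a) ∧
  (∀ a ∈ T.nodes, ∀ b ∈ T.nodes, r a b → r b a → a = b) ∧
  (∀ a ∈ T.nodes, ∀ b ∈ T.nodes, ∀ c ∈ T.nodes, r a b → r b c → r a c) ∧
  (∀ a ∈ T.nodes, ∀ b ∈ T.nodes, r a b ∨ r b a) ∧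
  (∀ p ∈ T.nodes, ∀ n ∈ T.nodes, p <+: n → r n p) ∧
  (∀ p : List Chir, T.IsInner p → ∃ m ∈ T.nodes, (p ++ [chir p]) <+: m ∧
      ∀ n ∈ T.nodes, p <+: n → r m n)

/-- The Morse labeling induced by an order `r`: the unique order isomorphism from the
nodes of `T` onto `{0, 1, …, 2·i(T)}`. -/
def IsMorseLabeling (T : MergeTree) (r : List Chir → List Chir → Prop)
    (lab : List Chir → ℕ) : Prop :=
  (∀ n ∈ T.nodes, lab n < 2 * T.innerCount + 1) ∧
  (∀ k : ℕ, k < 2 * T.innerCount + 1 → ∃ n ∈ T.nodes, lab n = k) ∧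
  (∀ a ∈ T.nodes, ∀ b ∈ T.nodes, lab a = lab b → a = b) ∧
  (∀ a ∈ T.nodes, ∀ b ∈ T.nodes, (r a b ↔ lab a ≤ lab b))

/-- An order-preserving bijection from the simplices of a path with `i(T)` 1-simplices
(concretely: `Fin (2·i(T)+1)` with its linear order, which is the simplex order coming
from an orientation) to the nodes of `T` with the simplex order. -/
def IsSimplexIso (T : MergeTree) (φ : Fin (2 * T.innerCount + 1) → List Chir) : Prop :=
  (∀ i, φ i ∈ T.nodes) ∧
  (∀ n ∈ T.nodes, ∃ i, φ i = n) ∧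
  (∀ i j, i ≤ j ↔ simpLe (φ i) (φ j))

/-- A discrete Morse function, with only critical cells, on a path whose simplices are
listed left to right as `Fin N` (even indices are vertices, odd indices are edges):
injective and weakly increasing from a vertex to an incident edge. -/
def IsPathDMFallCrit {N : ℕ} {α : Type*} [LinearOrder α] (f : Fin N → α) : Prop :=
  Function.Injective f ∧
  ∀ j : ℕ, ∀ h : 2 * j + 2 < N,
    f ⟨2 * j, by omega⟩ ≤ f ⟨2 * j + 1, by omega⟩ ∧
    f ⟨2 * j + 2, by omega⟩ ≤ f ⟨2 * j + 1, by omega⟩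

/-- `(T, ν)` is the Morse labeled merge tree induced by a dMf `f` (with only critical
cells) on a path whose simplices are `Fin N` listed left to right: `ν` assigns to each
node of `T` its corresponding critical simplex; the root corresponds to the maximal
critical edge; the children of an inner node correspond to the maxima of `f` on the two
connected components of the strict sublevel complex adjacent to the corresponding edge,
the component containing the smaller minimum inheriting the parent's chirality.  The
canonical labeling of the induced Ml tree is `f ∘ ν`. -/
def InducedMlPath {N : ℕ} {α : Type*} [LinearOrder α] (f : Fin N → α)
    (T : MergeTree) (ν : List Chir → Fin N) : Prop :=
  (∀ n ∈ T.nodes, ∀ n' ∈ T.nodes, ν n = ν n' → n = n') ∧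
  (∀ n ∈ T.nodes, (T.IsLeaf n ↔ (ν n).1 % 2 = 0)) ∧
  ((∃ i : Fin N, i.1 % 2 = 1) →
    T.IsInner [] ∧ ∀ i : Fin N, i.1 % 2 = 1 → f i ≤ f (ν [])) ∧
  ((¬ ∃ i : Fin N, i.1 % 2 = 1) → T.nodes = {([] : List Chir)}) ∧
  (∀ n : List Chir, T.IsInner n → (ν n).1 % 2 = 1 ∧
    ∃ lo hi : Fin N, lo.1 < (ν n).1 ∧ (ν n).1 < hi.1 ∧
      (∀ i : Fin N, lo.1 ≤ i.1 → i.1 < (ν n).1 → f i < f (ν n)) ∧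
      (∀ i : Fin N, (ν n).1 < i.1 → i.1 ≤ hi.1 → f i < f (ν n)) ∧
      (∀ i : Fin N, i.1 + 1 = lo.1 → f (ν n) ≤ f i) ∧
      (∀ i : Fin N, hi.1 + 1 = i.1 → f (ν n) ≤ f i) ∧
      ∃ il ir : Fin N, lo.1 ≤ il.1 ∧ il.1 < (ν n).1 ∧ (ν n).1 < ir.1 ∧ ir.1 ≤ hi.1 ∧
        (∀ i : Fin N, lo.1 ≤ i.1 → i.1 < (ν n).1 → f i ≤ f il) ∧
        (∀ i : Fin N, (ν n).1 < i.1 → i.1 ≤ hi.1 → f i ≤ f ir) ∧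
        ∃ ml mr : Fin N, lo.1 ≤ ml.1 ∧ ml.1 < (ν n).1 ∧ (ν n).1 < mr.1 ∧ mr.1 ≤ hi.1 ∧
          (∀ i : Fin N, lo.1 ≤ i.1 → i.1 < (ν n).1 → f ml ≤ f i) ∧
          (∀ i : Fin N, (ν n).1 < i.1 → i.1 ≤ hi.1 → f mr ≤ f i) ∧
          ((f ml < f mr ∧ ν (n ++ [chir n]) = il ∧ ν (n ++ [(chir n).other]) = ir) ∨
           (f mr < f ml ∧ ν (n ++ [chir n]) = ir ∧ ν (n ++ [(chir n).other]) = il)))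

/-!
The three orders involved are all lexicographic orders of words encoding the nodes, hence
linear: the simplex order is the in-order traversal of `T`, and the index-ordered and
sublevel-connected orders are Morse orders. Listing the nodes in in-order along the path puts
the leaves at the vertices and the inner nodes at the edges, and the subtree of a node `n` on a
block of the path that `n` splits into the blocks of its two children, while the two simplices
next to the block are ancestors of `n`. Hence for any Morse order the labeling rises from each
vertex to its edges, and the component of the sublevel set below an inner node `n` is its
subtree: the maxima of its two halves are the children of `n`, and the half containing the
minimum of the subtree, which a Morse order places on the side of the chirality of `n`, has the
smaller minimum.
-/

-- `≤` here is that of Mathlib's lexicographic `LinearOrder`, not core's `List.le`, for which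
-- `List.cons_le_cons_iff` is stated.
lemma List.cons_le_cons_iff' {α : Type*} [LinearOrder α] (a b : α) (l m : List α) :
    a :: l ≤ b :: m ↔ a < b ∨ a = b ∧ l ≤ m := by
  rw [← not_lt, List.cons_lt_cons_iff, ← not_lt]
  rcases lt_trichotomy a b with h | rfl | h
  · simp [h, h.ne, h.ne', not_lt.2 h.le]
  · simp
  · simp [h, h.ne, h.ne', not_lt.2 h.le]

lemma List.nil_le' {α : Type*} [LinearOrder α] (l : List α) : [] ≤ l :=
  not_lt.1 (List.not_lt_nil l)

lemma List.exists_iff_nil_or_cons {α : Type*} (P : List α → Prop) :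
    (∃ l, P l) ↔ P [] ∨ ∃ a l, P (a :: l) :=
  ⟨fun ⟨l, hl⟩ => by cases l <;> aesop, by aesop⟩

lemma List.IsPrefix.eq_or_append_singleton_prefix {α : Type*} {l m : List α} (h : l <+: m) :
    m = l ∨ ∃ a, l ++ [a] <+: m := by
  obtain ⟨_ | ⟨a, t⟩, rfl⟩ := h
  · simp
  · exact Or.inr ⟨a, t, by simp⟩

lemma List.IsPrefix.append_singleton_eq {α : Type*} {l m : List α} {a b : α}
    (ha : l ++ [a] <+: m) (hb : l ++ [b] <+: m) : a = b := by
  simpa using (List.prefix_append_right_inj l).1 (List.prefix_of_prefix_length_le ha hb (by simp))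

namespace Chir

lemma other_ne (c : Chir) : c.other ≠ c := by cases c <;> decide

lemma eq_or_eq_other (x c : Chir) : x = c ∨ x = c.other := by
  cases x <;> cases c <;> simp [other]

end Chir

lemma simpLe_cons_cons (x y : Chir) (a b : List Chir) :
    simpLe (x :: a) (y :: b) ↔ x = y ∧ simpLe a b ∨ x = .L ∧ y = .R := by
  unfold simpLe
  rw [List.exists_iff_nil_or_cons]
  cases x <;> cases y <;> simp [List.cons_prefix_cons]

lemma simpLe_nil_cons (y : Chir) (b : List Chir) : simpLe [] (y :: b) ↔ y = .R := by
  unfold simpLe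
  cases y <;> simp [List.cons_prefix_cons]

lemma simpLe_cons_nil (x : Chir) (a : List Chir) : simpLe (x :: a) [] ↔ x = .L := by
  unfold simpLe
  cases x <;> simp [List.cons_prefix_cons]

/-- Lexicographic comparison of these keys is the in-order traversal: `0` and `2` step into
the left and right subtree, and the final `1` stands for the node itself. -/
def inorderKey (w : List Chir) : List ℕ :=
  w.map (fun x => match x with | .L => 0 | .R => 2) ++ [1]

lemma simpLe_iff_inorderKey_le : ∀ a b : List Chir, simpLe a b ↔ inorderKey a ≤ inorderKey b
  | [], [] => by simp [simpLe]
  | [], y :: b => by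
    cases y <;> simp [simpLe_nil_cons, inorderKey, List.cons_le_cons_iff', List.nil_le']
  | x :: a, [] => by
    cases x <;> simp [simpLe_cons_nil, inorderKey, List.cons_le_cons_iff']
  | x :: a, y :: b => by
    have ih := simpLe_iff_inorderKey_le a b
    cases x <;> cases y <;> simp_all [simpLe_cons_cons, inorderKey, List.cons_le_cons_iff']

lemma inorderKey_injective : Function.Injective inorderKey := by
  intro a b h
  refine List.map_injective_iff.2 (fun x y hxy => ?_) (List.append_cancel_right h)
  cases x <;> cases y <;> simp_all

/-- `0` continues in the direction of the previous step (`last`), `1` turns, and the final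
`2` makes every node larger than its proper descendants. -/
def scKey (last : Chir) : List Chir → List ℕ
  | [] => [2]
  | x :: w => (if x = last then 0 else 1) :: scKey x w

lemma leAux_iff_scKey_le : ∀ (last : Chir) (a b : List Chir),
    leAux last a b ↔ scKey last a ≤ scKey last b
  | _, [], [] => by simp [leAux]
  | last, x :: a, [] => by
    simp only [leAux, scKey, true_iff, List.cons_le_cons_iff']
    split_ifs <;> simp
  | last, [], y :: b => by
    simp only [leAux, scKey, false_iff, List.cons_le_cons_iff', List.nil_le']
    split_ifs <;> simp
  | last, x :: a, y :: b => by
    have ih := leAux_iff_scKey_le x a b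
    cases x <;> cases y <;> cases last <;> simp_all [leAux, scKey, List.cons_le_cons_iff']

lemma scKey_injective : ∀ last : Chir, Function.Injective (scKey last)
  | _, [], [], _ => rfl
  | _, [], _ :: b, h => by cases b <;> simp [scKey] at h
  | _, _ :: a, [], h => by cases a <;> simp [scKey] at h
  | last, x :: a, y :: b, h => by
    obtain ⟨hxy, h⟩ := List.cons.inj h
    obtain rfl : x = y := by cases x <;> cases y <;> cases last <;> simp_all
    rw [scKey_injective x h]

lemma leAux_of_prefix : ∀ (last : Chir) {a b : List Chir}, b <+: a → leAux last a b
  | _, [], [], _ => trivial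
  | _, _ :: _, [], _ => trivial
  | _, [], _ :: _, h => absurd h.length_le (by simp)
  | _, _ :: _, _ :: _, h => by
    obtain ⟨rfl, h'⟩ := List.cons_prefix_cons.1 h
    simpa only [leAux, if_true] using leAux_of_prefix _ h'

lemma leAux_append_getLast : ∀ (last : Chir) (n s t : List Chir),
    leAux last (n ++ n.getLast?.getD last :: s) (n ++ (n.getLast?.getD last).other :: t)
  | last, [], _, _ => by simp [leAux, (Chir.other_ne last).symm]
  | _, x :: n, s, t => by simpa [leAux, List.getLast?_cons] using leAux_append_getLast x n s t

lemma scLe_of_prefix {a b : List Chir} (h : b <+: a) : scLe a b := leAux_of_prefix _ h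

lemma scLe_append_chir (n s t : List Chir) :
    scLe (n ++ chir n :: s) (n ++ (chir n).other :: t) :=
  leAux_append_getLast _ n s t

namespace MergeTree

variable (T : MergeTree)

lemma mem_of_prefix {p n : List Chir} (hn : n ∈ T.nodes) (h : p <+: n) : p ∈ T.nodes := by
  obtain ⟨t, rfl⟩ := h
  induction t using List.reverseRecOn with
  | nil => simpa using hn
  | append_singleton t x ih => exact ih (T.prefix_closed _ x (by simpa using hn))

variable {T}

lemma IsInner.append_mem {n : List Chir} (h : T.IsInner n) (c : Chir) : n ++ [c] ∈ T.nodes := by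
  cases c
  · exact h.2
  · exact (T.full n).1 h.2

lemma isLeaf_or_isInner {n : List Chir} (hn : n ∈ T.nodes) : T.IsLeaf n ∨ T.IsInner n := by
  by_cases h : n ++ [Chir.L] ∈ T.nodes
  · exact Or.inr ⟨hn, h⟩
  · exact Or.inl ⟨hn, h⟩

lemma IsLeaf.not_isInner {n : List Chir} (h : T.IsLeaf n) : ¬ T.IsInner n :=
  fun h' => h.2 h'.2

lemma isInner_of_append_prefix {n m : List Chir} {c : Chir} (hm : m ∈ T.nodes)
    (h : n ++ [c] <+: m) : T.IsInner n := by
  have hc := T.mem_of_prefix hm h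
  refine ⟨T.prefix_closed n c hc, ?_⟩
  cases c
  · exact hc
  · exact (T.full n).2 hc

lemma IsLeaf.eq_of_prefix {n m : List Chir} (hn : T.IsLeaf n) (hm : m ∈ T.nodes)
    (h : n <+: m) : m = n := by
  obtain h | ⟨c, hc⟩ := h.eq_or_append_singleton_prefix
  · exact h
  · exact absurd (isInner_of_append_prefix hm hc) hn.not_isInner

lemma exists_isLeaf_prefix {n : List Chir} (hn : n ∈ T.nodes) :
    ∃ u, n <+: u ∧ T.IsLeaf u := by
  obtain ⟨u, hu, hmax⟩ := Finset.exists_max_image (T.nodes.filter (n <+: ·)) List.length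
    ⟨n, Finset.mem_filter.2 ⟨hn, List.prefix_refl n⟩⟩
  rw [Finset.mem_filter] at hu
  refine ⟨u, hu.2, hu.1, fun hL => ?_⟩
  have := hmax _ (Finset.mem_filter.2 ⟨hL, hu.2.trans (List.prefix_append u _)⟩)
  simp at this

lemma isInner_nil_of_isInner {n : List Chir} (h : T.IsInner n) : T.IsInner [] := by
  cases n with
  | nil => exact h
  | cons c n => exact isInner_of_append_prefix h.1 (c := c) (by simp)

variable (T)

lemma card_nodes : T.nodes.card = 2 * T.innerCount + 1 := by
  have hchildren : (T.nodes.erase []).card =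
      ((T.nodes.filter fun n => n ++ [Chir.L] ∈ T.nodes) ×ˢ ({.L, .R} : Finset Chir)).card := by
    symm
    refine Finset.card_nbij (fun p => p.1 ++ [p.2]) ?_ ?_ ?_
    · rintro ⟨w, c⟩ h
      simp only [Finset.coe_product, Set.mem_prod, Finset.mem_coe, Finset.mem_filter] at h
      simpa using (IsInner.append_mem h.1 c)
    · rintro ⟨w, c⟩ - ⟨w', c'⟩ - h
      simp_all
    · intro m hm
      rw [Finset.coe_erase, Set.mem_sdiff, Finset.mem_coe] at hm
      obtain ⟨w, c, rfl⟩ := (List.eq_nil_or_concat' m).resolve_left hm.2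
      have hw : T.IsInner w := isInner_of_append_prefix hm.1 (List.prefix_refl _)
      unfold MergeTree.IsInner at hw
      refine ⟨(w, c), ?_, rfl⟩
      cases c <;> simpa using hw
  rw [Finset.card_product, show ({.L, .R} : Finset Chir).card = 2 from rfl,
    Finset.card_erase_of_mem T.root_mem] at hchildren
  have := Finset.card_pos.2 ⟨_, T.root_mem⟩
  unfold innerCount
  omega

end MergeTree

section KeyRank

variable {α β : Type*} [LinearOrder β] (S : Finset α) (key : α → β)

def keyRank (a : α) : ℕ := (S.filter fun b => key b < key a).card

variable {S key}

lemma keyRank_lt_keyRank {a b : α} (ha : a ∈ S) (h : key a < key b) :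
    keyRank S key a < keyRank S key b := by
  refine Finset.card_lt_card ((Finset.ssubset_iff_of_subset ?_).2 ⟨a, ?_, ?_⟩)
  · exact Finset.monotone_filter_right S fun _ _ hc => hc.trans h
  · exact Finset.mem_filter.2 ⟨ha, h⟩
  · simp

lemma keyRank_le_keyRank_iff {a b : α} (hb : b ∈ S) :
    keyRank S key a ≤ keyRank S key b ↔ key a ≤ key b :=
  ⟨fun h => not_lt.1 fun h' => (keyRank_lt_keyRank hb h').not_ge h,
    fun h => Finset.card_le_card (Finset.monotone_filter_right S fun _ _ hc => hc.trans_le h)⟩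

lemma keyRank_lt_card {a : α} (ha : a ∈ S) : keyRank S key a < S.card :=
  Finset.card_lt_card ((Finset.ssubset_iff_of_subset (Finset.filter_subset _ S)).2
    ⟨a, ha, by simp⟩)

lemma exists_keyRank_eq (hkey : Set.InjOn key S) {k : ℕ} (hk : k < S.card) :
    ∃ a ∈ S, keyRank S key a = k := by
  obtain ⟨a, ha, rfl⟩ := Finset.surj_on_of_inj_on_of_card_le (t := Finset.range S.card)
    (fun a _ => keyRank S key a) (fun a ha => Finset.mem_range.2 (keyRank_lt_card ha))
    (fun a b ha hb h => hkey ha hb (le_antisymm ((keyRank_le_keyRank_iff hb).1 h.le)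
      ((keyRank_le_keyRank_iff ha).1 h.ge)))
    (by simp) k (Finset.mem_range.2 hk)
  exact ⟨a, ha, rfl⟩

end KeyRank

section MorseFromKey

variable {β : Type*} [LinearOrder β] {T : MergeTree} {r : List Chir → List Chir → Prop}
  {key : List Chir → β}

lemma isMorseLabeling_keyRank (hkey : Set.InjOn key T.nodes)
    (hr : ∀ a ∈ T.nodes, ∀ b ∈ T.nodes, r a b ↔ key a ≤ key b) :
    IsMorseLabeling T r (keyRank T.nodes key) := by
  refine ⟨fun n hn => T.card_nodes ▸ keyRank_lt_card hn,
    fun k hk => exists_keyRank_eq hkey (T.card_nodes ▸ hk), fun a ha b hb h => ?_,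
    fun a ha b hb => (hr a ha b hb).trans (keyRank_le_keyRank_iff hb).symm⟩
  exact hkey ha hb (le_antisymm ((keyRank_le_keyRank_iff hb).1 h.le)
    ((keyRank_le_keyRank_iff ha).1 h.ge))

lemma isMorseOrder_of_key (hkey : Set.InjOn key T.nodes)
    (hr : ∀ a ∈ T.nodes, ∀ b ∈ T.nodes, r a b ↔ key a ≤ key b)
    (hdesc : ∀ p ∈ T.nodes, ∀ n ∈ T.nodes, p <+: n → r n p)
    (hside : ∀ p, T.IsInner p → ∃ u ∈ T.nodes, p ++ [chir p] <+: u ∧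
      ∀ v ∈ T.nodes, p ++ [(chir p).other] <+: v → r u v) :
    IsMorseOrder T r := by
  refine ⟨fun a ha => (hr a ha a ha).2 le_rfl,
    fun a ha b hb hab hba => hkey ha hb
      (le_antisymm ((hr a ha b hb).1 hab) ((hr b hb a ha).1 hba)),
    fun a ha b hb c hc hab hbc => (hr a ha c hc).2
      (((hr a ha b hb).1 hab).trans ((hr b hb c hc).1 hbc)),
    fun a ha b hb => (le_total (key a) (key b)).imp (hr a ha b hb).2 (hr b hb a ha).2,
    hdesc, fun p hp => ?_⟩
  obtain ⟨u, hu, hpu, hu_le⟩ := hside p hp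
  have hu_sub : p <+: u := (List.prefix_append p _).trans hpu
  obtain ⟨m, hm, hmin⟩ := Finset.exists_min_image (T.nodes.filter (p <+: ·)) key
    ⟨p, Finset.mem_filter.2 ⟨hp.1, List.prefix_refl p⟩⟩
  rw [Finset.mem_filter] at hm
  refine ⟨m, hm.1, ?_, fun n hn hpn =>
    (hr m hm.1 n hn).2 (hmin n (Finset.mem_filter.2 ⟨hn, hpn⟩))⟩
  by_contra hpm
  -- otherwise `m` is `p` or lies on the other side, and `u` beats it
  have hum : r u m := by
    obtain rfl | ⟨c, hc⟩ := hm.2.eq_or_append_singleton_prefix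
    · exact hdesc m hm.1 u hu hu_sub
    · obtain rfl | rfl := Chir.eq_or_eq_other c (chir p)
      · exact absurd hc hpm
      · exact hu_le m hm.1 hc
  obtain rfl : u = m := hkey hu hm.1
    (le_antisymm ((hr u hu m hm.1).1 hum) (hmin u (Finset.mem_filter.2 ⟨hu, hu_sub⟩)))
  exact hpm hpu

end MorseFromKey

namespace MergeTree

variable (T : MergeTree)

lemma isMorseOrder_scLe : IsMorseOrder T scLe := by
  refine isMorseOrder_of_key (scKey_injective _).injOn (fun a _ b _ => leAux_iff_scKey_le _ a b)
    (fun _ _ _ _ h => scLe_of_prefix h) fun p hp => ⟨p ++ [chir p], hp.append_mem _,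
      List.prefix_refl _, fun v _ hv => ?_⟩
  obtain ⟨t, rfl⟩ := hv
  simpa using scLe_append_chir p [] t

/-- The leading bit puts the leaves below the inner nodes. -/
def ioKey (a : List Chir) : List ℕ := (if a ++ [.L] ∈ T.nodes then 1 else 0) :: scKey .L a

lemma ioLe_iff_ioKey_le {a b : List Chir} (ha : a ∈ T.nodes) (hb : b ∈ T.nodes) :
    ioLe T a b ↔ T.ioKey a ≤ T.ioKey b := by
  unfold ioLe ioKey IsLeaf IsInner scLe
  by_cases ha' : a ++ [.L] ∈ T.nodes <;> by_cases hb' : b ++ [.L] ∈ T.nodes <;>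
    simp [ha, hb, ha', hb', List.cons_le_cons_iff', leAux_iff_scKey_le]

lemma ioKey_injective : Function.Injective T.ioKey :=
  fun _ _ h => scKey_injective _ (List.cons.inj h).2

lemma isMorseOrder_ioLe : IsMorseOrder T (ioLe T) := by
  refine isMorseOrder_of_key T.ioKey_injective.injOn
    (fun a ha b hb => T.ioLe_iff_ioKey_le ha hb) (fun p hp n hn h => ?_) fun p hp => ?_
  · rcases isLeaf_or_isInner hp with hl | hi
    · obtain rfl := hl.eq_of_prefix hn h
      exact Or.inr ⟨Or.inl ⟨hl, hl⟩, scLe_of_prefix h⟩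
    · rcases isLeaf_or_isInner hn with hl' | hi'
      · exact Or.inl ⟨hl', hi⟩
      · exact Or.inr ⟨Or.inr ⟨hi', hi⟩, scLe_of_prefix h⟩
  · obtain ⟨u, hpu, hu⟩ := exists_isLeaf_prefix (hp.append_mem (chir p))
    refine ⟨u, hu.1, hpu, fun v hv hpv => ?_⟩
    rcases isLeaf_or_isInner hv with hl | hi
    · refine Or.inr ⟨Or.inl ⟨hu, hl⟩, ?_⟩
      obtain ⟨s, rfl⟩ := hpu
      obtain ⟨t, rfl⟩ := hpv
      simpa using scLe_append_chir p s t
    · exact Or.inl ⟨hu, hi⟩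

lemma exists_isSimplexIso : ∃ φ, IsSimplexIso T φ := by
  obtain ⟨hlt, hsurj, hinj, hle⟩ := isMorseLabeling_keyRank (T := T) (r := simpLe)
    inorderKey_injective.injOn fun a _ b _ => simpLe_iff_inorderKey_le a b
  choose φ hφ hφlab using fun i : Fin (2 * T.innerCount + 1) => hsurj i i.2
  refine ⟨φ, hφ, fun n hn => ⟨⟨_, hlt n hn⟩, hinj _ (hφ _) n hn (hφlab _)⟩,
    fun i j => ?_⟩
  rw [hle _ (hφ i) _ (hφ j), hφlab, hφlab, Fin.le_iff_val_le_val]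

end MergeTree

namespace IsSimplexIso

open MergeTree

variable {T : MergeTree} {φ : Fin (2 * T.innerCount + 1) → List Chir}

lemma injective (hφ : IsSimplexIso T φ) : Function.Injective φ := fun i j h =>
  le_antisymm ((hφ.2.2 i j).2 (Or.inl h)) ((hφ.2.2 j i).2 (Or.inl h.symm))

lemma apply_invFun (hφ : IsSimplexIso T φ) {n : List Chir} (hn : n ∈ T.nodes) :
    φ (Function.invFun φ n) = n :=
  Function.invFun_eq (hφ.2.1 n hn)

lemma invFun_apply (hφ : IsSimplexIso T φ) (i : Fin (2 * T.innerCount + 1)) :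
    Function.invFun φ (φ i) = i :=
  Function.leftInverse_invFun hφ.injective i

lemma lt_of_append_left_prefix (hφ : IsSimplexIso T φ) {i j : Fin (2 * T.innerCount + 1)}
    (h : φ j ++ [.L] <+: φ i) : i < j := by
  refine lt_of_le_of_ne ((hφ.2.2 i j).2 (Or.inr (Or.inl h))) fun hij => ?_
  subst hij
  simpa using h.length_le

lemma lt_of_append_right_prefix (hφ : IsSimplexIso T φ) {i j : Fin (2 * T.innerCount + 1)}
    (h : φ i ++ [.R] <+: φ j) : i < j := by
  refine lt_of_le_of_ne ((hφ.2.2 i j).2 (Or.inr (Or.inr (Or.inl h)))) fun hij => ?_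
  subst hij
  simpa using h.length_le

lemma lt_of_split (hφ : IsSimplexIso T φ) {i j : Fin (2 * T.innerCount + 1)} {p : List Chir}
    (hi : p ++ [.L] <+: φ i) (hj : p ++ [.R] <+: φ j) : i < j := by
  refine lt_of_le_of_ne ((hφ.2.2 i j).2 (Or.inr (Or.inr (Or.inr ⟨p, hi, hj⟩)))) fun hij => ?_
  subst hij
  exact absurd (hi.append_singleton_eq hj) (by decide)

lemma prefix_of_le_of_le (hφ : IsSimplexIso T φ) {n : List Chir}
    {i j k : Fin (2 * T.innerCount + 1)} (hi : n <+: φ i) (hk : n <+: φ k) (hij : i ≤ j)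
    (hjk : j ≤ k) : n <+: φ j := by
  by_contra hj
  obtain ⟨l, rfl⟩ := hφ.2.1 n (T.mem_of_prefix (hφ.1 i) hi)
  rcases le_total j l with hjl | hlj
  · rcases (hφ.2.2 j l).1 hjl with h | h | h | ⟨p, hpj, hpl⟩
    · exact hj (h ▸ List.prefix_refl _)
    · exact hj ((List.prefix_append _ _).trans h)
    · exact (hφ.lt_of_append_right_prefix (h.trans hi)).not_ge hij
    · exact (hφ.lt_of_split hpj (hpl.trans hi)).not_ge hij
  · rcases (hφ.2.2 l j).1 hlj with h | h | h | ⟨p, hpl, hpj⟩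
    · exact hj (h ▸ List.prefix_refl _)
    · exact (hφ.lt_of_append_left_prefix (h.trans hk)).not_ge hjk
    · exact hj ((List.prefix_append _ _).trans h)
    · exact (hφ.lt_of_split (hpl.trans hk) hpj).not_ge hjk

lemma append_left_prefix_of_lt (hφ : IsSimplexIso T φ) {i l : Fin (2 * T.innerCount + 1)}
    (h : φ l <+: φ i) (hil : i < l) : φ l ++ [.L] <+: φ i := by
  obtain h | ⟨c, hc⟩ := h.eq_or_append_singleton_prefix
  · exact absurd (hφ.injective h) hil.ne
  · cases c
    · exact hc
    · exact absurd (hφ.lt_of_append_right_prefix hc) hil.not_gt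

lemma append_right_prefix_of_lt (hφ : IsSimplexIso T φ) {i l : Fin (2 * T.innerCount + 1)}
    (h : φ l <+: φ i) (hli : l < i) : φ l ++ [.R] <+: φ i := by
  obtain h | ⟨c, hc⟩ := h.eq_or_append_singleton_prefix
  · exact absurd (hφ.injective h) hli.ne'
  · cases c
    · exact absurd (hφ.lt_of_append_left_prefix hc) hli.not_gt
    · exact hc

lemma append_right_prefix_succ (hφ : IsSimplexIso T φ) {i j : Fin (2 * T.innerCount + 1)}
    (hij : i.1 + 1 = j.1) (hi : T.IsInner (φ i)) : φ i ++ [.R] <+: φ j := by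
  obtain ⟨k, hk⟩ := hφ.2.1 _ (hi.append_mem .R)
  have hik := hφ.lt_of_append_right_prefix (hk ▸ List.prefix_refl _ : φ i ++ [.R] <+: φ k)
  exact hφ.append_right_prefix_of_lt (hφ.prefix_of_le_of_le (List.prefix_refl _)
    (hk ▸ List.prefix_append _ _) (Fin.le_iff_val_le_val.2 (by omega))
    (Fin.le_iff_val_le_val.2 (by omega))) (Fin.lt_def.2 (by omega))

lemma append_left_prefix_pred (hφ : IsSimplexIso T φ) {i j : Fin (2 * T.innerCount + 1)}
    (hij : i.1 + 1 = j.1) (hj : T.IsInner (φ j)) : φ j ++ [.L] <+: φ i := by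
  obtain ⟨k, hk⟩ := hφ.2.1 _ (hj.append_mem .L)
  have hkj := hφ.lt_of_append_left_prefix (hk ▸ List.prefix_refl _ : φ j ++ [.L] <+: φ k)
  exact hφ.append_left_prefix_of_lt (hφ.prefix_of_le_of_le (hk ▸ List.prefix_append _ _)
    (List.prefix_refl _) (Fin.le_iff_val_le_val.2 (by omega))
    (Fin.le_iff_val_le_val.2 (by omega))) (Fin.lt_def.2 (by omega))

/-- Between two leaves lies the inner node where their paths split. -/
lemma not_isLeaf_and_isLeaf (hφ : IsSimplexIso T φ) {i j : Fin (2 * T.innerCount + 1)}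
    (hij : i.1 + 1 = j.1) (hi : T.IsLeaf (φ i)) (hj : T.IsLeaf (φ j)) : False := by
  rcases (hφ.2.2 i j).1 (Fin.le_iff_val_le_val.2 (by omega)) with h | h | h | ⟨p, hpi, hpj⟩
  · exact absurd (hφ.injective h) (Fin.ne_of_val_ne (by omega))
  · exact hj.not_isInner (isInner_of_append_prefix (hφ.1 i) h)
  · exact hi.not_isInner (isInner_of_append_prefix (hφ.1 j) h)
  · obtain ⟨k, rfl⟩ :=
      hφ.2.1 p (T.mem_of_prefix (hφ.1 i) ((List.prefix_append _ _).trans hpi))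
    have h1 := hφ.lt_of_append_left_prefix hpi
    have h2 := hφ.lt_of_append_right_prefix hpj
    rw [Fin.lt_def] at h1 h2
    omega

lemma not_isInner_and_isInner (hφ : IsSimplexIso T φ) {i j : Fin (2 * T.innerCount + 1)}
    (hij : i.1 + 1 = j.1) (hi : T.IsInner (φ i)) (hj : T.IsInner (φ j)) : False := by
  have h1 := (hφ.append_right_prefix_succ hij hi).length_le
  have h2 := (hφ.append_left_prefix_pred hij hj).length_le
  simp only [List.length_append, List.length_singleton] at h1 h2
  omega

lemma isLeaf_zero (hφ : IsSimplexIso T φ) : T.IsLeaf (φ 0) := by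
  refine (isLeaf_or_isInner (hφ.1 0)).resolve_right fun h => ?_
  obtain ⟨k, hk⟩ := hφ.2.1 _ (h.append_mem .L)
  exact (Fin.zero_le k).not_gt (hφ.lt_of_append_left_prefix (hk ▸ List.prefix_refl _))

lemma isLeaf_iff (hφ : IsSimplexIso T φ) (i : Fin (2 * T.innerCount + 1)) :
    T.IsLeaf (φ i) ↔ i.1 % 2 = 0 := by
  induction i using Fin.induction with
  | zero => simpa using hφ.isLeaf_zero
  | succ i ih =>
    have hij : i.castSucc.1 + 1 = i.succ.1 := rfl
    simp only [Fin.val_succ, Fin.val_castSucc] at ih ⊢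
    rcases isLeaf_or_isInner (hφ.1 i.castSucc) with hl | hl <;>
      rcases isLeaf_or_isInner (hφ.1 i.succ) with hl' | hl'
    · exact (hφ.not_isLeaf_and_isLeaf hij hl hl').elim
    · have := ih.1 hl
      exact iff_of_false (fun h => h.not_isInner hl') (by omega)
    · have := mt ih.2 (fun h => h.not_isInner hl)
      exact iff_of_true hl' (by omega)
    · exact (hφ.not_isInner_and_isInner hij hl hl').elim

lemma prefix_of_succ (hφ : IsSimplexIso T φ) {n : List Chir} {i j : Fin (2 * T.innerCount + 1)}
    (hij : i.1 + 1 = j.1) (hi : ¬ n <+: φ i) (hj : n <+: φ j) : φ i <+: n := by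
  rcases isLeaf_or_isInner (hφ.1 i) with hl | hl
  · rcases isLeaf_or_isInner (hφ.1 j) with hl' | hl'
    · exact (hφ.not_isLeaf_and_isLeaf hij hl hl').elim
    · exact absurd
        (hj.trans ((List.prefix_append _ _).trans (hφ.append_left_prefix_pred hij hl'))) hi
  · exact (List.prefix_or_prefix_of_prefix
      ((List.prefix_append _ _).trans (hφ.append_right_prefix_succ hij hl)) hj).resolve_right hi

lemma prefix_of_pred (hφ : IsSimplexIso T φ) {n : List Chir} {i j : Fin (2 * T.innerCount + 1)}
    (hij : j.1 + 1 = i.1) (hi : ¬ n <+: φ i) (hj : n <+: φ j) : φ i <+: n := by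
  rcases isLeaf_or_isInner (hφ.1 i) with hl | hl
  · rcases isLeaf_or_isInner (hφ.1 j) with hl' | hl'
    · exact (hφ.not_isLeaf_and_isLeaf hij hl' hl).elim
    · exact absurd
        (hj.trans ((List.prefix_append _ _).trans (hφ.append_right_prefix_succ hij hl'))) hi
  · exact (List.prefix_or_prefix_of_prefix
      ((List.prefix_append _ _).trans (hφ.append_left_prefix_pred hij hl)) hj).resolve_right hi

lemma exists_subtree_block (hφ : IsSimplexIso T φ) (l : Fin (2 * T.innerCount + 1)) :
    ∃ lo hi : Fin (2 * T.innerCount + 1), (∀ i, φ l <+: φ i ↔ lo ≤ i ∧ i ≤ hi) ∧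
      (∀ i, φ l ++ [.L] <+: φ i ↔ lo ≤ i ∧ i < l) ∧ (∀ i, φ l ++ [.R] <+: φ i ↔ l < i ∧ i ≤ hi) ∧
      (∀ i : Fin (2 * T.innerCount + 1), i.1 + 1 = lo.1 → φ i <+: φ l) ∧
      (∀ i : Fin (2 * T.innerCount + 1), hi.1 + 1 = i.1 → φ i <+: φ l) := by
  set P := Finset.univ.filter fun i => φ l <+: φ i
  have hP : P.Nonempty := ⟨l, Finset.mem_filter.2 ⟨Finset.mem_univ _, List.prefix_refl _⟩⟩
  have hmem : ∀ i, i ∈ P ↔ φ l <+: φ i := by simp [P]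
  have hlo := (hmem _).1 (P.min'_mem hP)
  have hhi := (hmem _).1 (P.max'_mem hP)
  have hblock : ∀ i, φ l <+: φ i ↔ P.min' hP ≤ i ∧ i ≤ P.max' hP := fun i =>
    ⟨fun h => ⟨P.min'_le i ((hmem i).2 h), P.le_max' i ((hmem i).2 h)⟩,
      fun h => hφ.prefix_of_le_of_le hlo hhi h.1 h.2⟩
  have hl := (hblock l).1 (List.prefix_refl _)
  refine ⟨P.min' hP, P.max' hP, hblock, fun i => ⟨fun h => ?_, fun h => ?_⟩,
    fun i => ⟨fun h => ?_, fun h => ?_⟩, fun i hi => hφ.prefix_of_succ hi ?_ hlo,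
    fun i hi => hφ.prefix_of_pred hi ?_ hhi⟩
  · exact ⟨((hblock i).1 ((List.prefix_append _ _).trans h)).1, hφ.lt_of_append_left_prefix h⟩
  · exact hφ.append_left_prefix_of_lt ((hblock i).2 ⟨h.1, h.2.le.trans hl.2⟩) h.2
  · exact ⟨hφ.lt_of_append_right_prefix h, ((hblock i).1 ((List.prefix_append _ _).trans h)).2⟩
  · exact hφ.append_right_prefix_of_lt ((hblock i).2 ⟨hl.1.trans h.1.le, h.2⟩) h.1
  · exact fun h => ((hblock i).1 h).1.not_gt (Fin.lt_def.2 (by omega))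
  · exact fun h => ((hblock i).1 h).2.not_gt (Fin.lt_def.2 (by omega))

lemma isInner_nil_of_odd (hφ : IsSimplexIso T φ) {i : Fin (2 * T.innerCount + 1)}
    (hi : i.1 % 2 = 1) : T.IsInner [] :=
  isInner_nil_of_isInner ((isLeaf_or_isInner (hφ.1 i)).resolve_left
    fun hl => by simp [(hφ.isLeaf_iff i).1 hl] at hi)

lemma nodes_eq_singleton_of_not_odd (hφ : IsSimplexIso T φ)
    (h : ¬ ∃ i : Fin (2 * T.innerCount + 1), i.1 % 2 = 1) : T.nodes = {[]} := by
  have hroot : T.IsLeaf [] := by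
    rw [← hφ.apply_invFun T.root_mem, hφ.isLeaf_iff]
    by_contra h'
    exact h ⟨Function.invFun φ [], by omega⟩
  ext m
  exact ⟨fun hm => Finset.mem_singleton.2 (hroot.eq_of_prefix hm List.nil_prefix),
    fun hm => Finset.mem_singleton.1 hm ▸ T.root_mem⟩

end IsSimplexIso

namespace IsMorseLabeling

open MergeTree

variable {T : MergeTree} {r : List Chir → List Chir → Prop} {lab : List Chir → ℕ}

lemma le_of_prefix (hlab : IsMorseLabeling T r lab) (hr : IsMorseOrder T r) {p n : List Chir}
    (hn : n ∈ T.nodes) (h : p <+: n) : lab n ≤ lab p :=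
  have hp := T.mem_of_prefix hn h
  (hlab.2.2.2 n hn p hp).1 (hr.2.2.2.2.1 p hp n hn h)

lemma lt_of_prefix (hlab : IsMorseLabeling T r lab) (hr : IsMorseOrder T r) {p n : List Chir}
    (hn : n ∈ T.nodes) (h : p <+: n) (hne : n ≠ p) : lab n < lab p :=
  (hlab.le_of_prefix hr hn h).lt_of_ne fun e => hne (hlab.2.2.1 n hn p (T.mem_of_prefix hn h) e)

lemma exists_min (hlab : IsMorseLabeling T r lab) (hr : IsMorseOrder T r) {p : List Chir}
    (hp : T.IsInner p) :
    ∃ m ∈ T.nodes, p ++ [chir p] <+: m ∧ ∀ n ∈ T.nodes, p <+: n → lab m ≤ lab n :=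
  let ⟨m, hm, hpm, hmin⟩ := hr.2.2.2.2.2 p hp
  ⟨m, hm, hpm, fun n hn h => (hlab.2.2.2 m hm n hn).1 (hmin n hn h)⟩

end IsMorseLabeling

namespace IsMorseOrder

open MergeTree

variable {T : MergeTree} {r : List Chir → List Chir → Prop} {lab : List Chir → ℕ}
  {φ : Fin (2 * T.innerCount + 1) → List Chir}

theorem isPathDMFallCrit (hr : IsMorseOrder T r) (hlab : IsMorseLabeling T r lab)
    (hφ : IsSimplexIso T φ) : IsPathDMFallCrit (fun i => lab (φ i)) := by
  refine ⟨fun i j h => hφ.injective (hlab.2.2.1 _ (hφ.1 i) _ (hφ.1 j) h), fun j h => ?_⟩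
  have hodd : T.IsInner (φ ⟨2 * j + 1, by omega⟩) :=
    (isLeaf_or_isInner (hφ.1 _)).resolve_left fun hl => by simpa using (hφ.isLeaf_iff _).1 hl
  exact ⟨hlab.le_of_prefix hr (hφ.1 _)
      ((List.prefix_append _ _).trans (hφ.append_left_prefix_pred rfl hodd)),
    hlab.le_of_prefix hr (hφ.1 _)
      ((List.prefix_append _ _).trans (hφ.append_right_prefix_succ rfl hodd))⟩

lemma lt_of_chir_side (hr : IsMorseOrder T r) (hlab : IsMorseLabeling T r lab)
    (hφ : IsSimplexIso T φ) {l i j : Fin (2 * T.innerCount + 1)} (hl : T.IsInner (φ l))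
    (hi : ∀ k, φ l ++ [chir (φ l)] <+: φ k → lab (φ i) ≤ lab (φ k))
    (hj : φ l ++ [(chir (φ l)).other] <+: φ j) : lab (φ i) < lab (φ j) := by
  obtain ⟨m, hm, hlm, hmin⟩ := hlab.exists_min hr hl
  have hmj : m ≠ φ j := by
    rintro rfl
    exact Chir.other_ne _ (hj.append_singleton_eq hlm)
  calc lab (φ i) ≤ lab m := hφ.apply_invFun hm ▸ hi _ ((hφ.apply_invFun hm).symm ▸ hlm)
    _ < lab (φ j) := (hmin _ (hφ.1 j) ((List.prefix_append _ _).trans hj)).lt_of_ne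
        fun e => hmj (hlab.2.2.1 _ hm _ (hφ.1 j) e)

theorem inducedMlPath (hr : IsMorseOrder T r) (hlab : IsMorseLabeling T r lab)
    (hφ : IsSimplexIso T φ) : InducedMlPath (fun i => lab (φ i)) T (Function.invFun φ) := by
  refine ⟨fun n hn n' hn' h => by rw [← hφ.apply_invFun hn, h, hφ.apply_invFun hn'],
    fun n hn => by rw [← hφ.isLeaf_iff, hφ.apply_invFun hn],
    fun ⟨i, hi⟩ => ⟨hφ.isInner_nil_of_odd hi, fun j _ => ?_⟩, hφ.nodes_eq_singleton_of_not_odd,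
    fun n hn => ?_⟩
  · show lab (φ j) ≤ lab (φ _)
    rw [hφ.apply_invFun T.root_mem]
    exact hlab.le_of_prefix hr (hφ.1 j) List.nil_prefix
  · obtain ⟨l, rfl⟩ := hφ.2.1 n hn.1
    obtain ⟨lo, hi, hblock, hleft, hright, hlo, hhi⟩ := hφ.exists_subtree_block l
    simp only [hφ.invFun_apply]
    set cL := Function.invFun φ (φ l ++ [.L])
    set cR := Function.invFun φ (φ l ++ [.R])
    have hcL : φ cL = φ l ++ [.L] := hφ.apply_invFun (hn.append_mem _)
    have hcR : φ cR = φ l ++ [.R] := hφ.apply_invFun (hn.append_mem _)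
    have hl_blk := (hblock l).1 (List.prefix_refl _)
    have hcL_mem := (hleft cL).1 (hcL ▸ List.prefix_refl _)
    have hcR_mem := (hright cR).1 (hcR ▸ List.prefix_refl _)
    have hdesc : ∀ i, lo ≤ i → i ≤ hi → i ≠ l → lab (φ i) < lab (φ l) :=
      fun i h1 h2 hne =>
        hlab.lt_of_prefix hr (hφ.1 i) ((hblock i).2 ⟨h1, h2⟩) (hφ.injective.ne hne)
    obtain ⟨ml, hml, hml_min⟩ := Set.exists_min_image {i | lo ≤ i ∧ i < l}
      (fun i => lab (φ i)) (Set.toFinite _) ⟨cL, hcL_mem⟩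
    obtain ⟨mr, hmr, hmr_min⟩ := Set.exists_min_image {i | l < i ∧ i ≤ hi}
      (fun i => lab (φ i)) (Set.toFinite _) ⟨cR, hcR_mem⟩
    refine ⟨Nat.mod_two_ne_zero.1 (mt (hφ.isLeaf_iff l).2 fun h => h.not_isInner hn), lo, hi,
      hcL_mem.1.trans_lt hcL_mem.2, hcR_mem.1.trans_le hcR_mem.2,
      fun i h1 h2 => hdesc i h1 (h2.le.trans hl_blk.2) (Fin.ne_of_lt h2),
      fun i h1 h2 => hdesc i (hl_blk.1.trans h1.le) h2 (Fin.ne_of_gt h1),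
      fun i h => hlab.le_of_prefix hr hn.1 (hlo i h),
      fun i h => hlab.le_of_prefix hr hn.1 (hhi i h),
      cL, cR, hcL_mem.1, hcL_mem.2, hcR_mem.1, hcR_mem.2,
      fun i h1 h2 => hcL ▸ hlab.le_of_prefix hr (hφ.1 i) ((hleft i).2 ⟨h1, h2⟩),
      fun i h1 h2 => hcR ▸ hlab.le_of_prefix hr (hφ.1 i) ((hright i).2 ⟨h1, h2⟩),
      ml, mr, hml.1, hml.2, hmr.1, hmr.2, fun i h1 h2 => hml_min i ⟨h1, h2⟩,
      fun i h1 h2 => hmr_min i ⟨h1, h2⟩, ?_⟩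
    cases hc : chir (φ l)
    · refine Or.inl ⟨hr.lt_of_chir_side hlab hφ hn (fun k hk => hml_min k ((hleft k).1 ?_))
        (by simpa [hc, Chir.other] using (hright mr).2 hmr), rfl, rfl⟩
      simpa [hc] using hk
    · refine Or.inr ⟨hr.lt_of_chir_side hlab hφ hn (fun k hk => hmr_min k ((hright k).1 ?_))
        (by simpa [hc, Chir.other] using (hleft ml).2 hml), rfl, rfl⟩
      simpa [hc] using hk

end IsMorseOrder

/-- Every merge tree `T` is represented by a discrete Morse function, with only
critical cells, on a path with `i(T)` 1-simplices; indeed both the induced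
index-ordered dMf and the induced sublevel-connected dMf realize `T` as their induced
merge tree. -/
theorem stmt18 (T : MergeTree) :
    ∃ (labio labsc : List Chir → ℕ) (φ : Fin (2 * T.innerCount + 1) → List Chir),
      IsMorseLabeling T (ioLe T) labio ∧ IsMorseLabeling T scLe labsc ∧
      IsSimplexIso T φ ∧
      IsPathDMFallCrit (fun i => labio (φ i)) ∧
      IsPathDMFallCrit (fun i => labsc (φ i)) ∧
      (∃ ν, InducedMlPath (fun i => labio (φ i)) T ν) ∧
      (∃ ν, InducedMlPath (fun i => labsc (φ i)) T ν) := by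
  obtain ⟨φ, hφ⟩ := T.exists_isSimplexIso
  have hio : IsMorseLabeling T (ioLe T) (keyRank T.nodes T.ioKey) :=
    isMorseLabeling_keyRank T.ioKey_injective.injOn fun _ ha _ hb => T.ioLe_iff_ioKey_le ha hb
  have hsc : IsMorseLabeling T scLe (keyRank T.nodes (scKey .L)) :=
    isMorseLabeling_keyRank (scKey_injective _).injOn fun a _ b _ => leAux_iff_scKey_le _ a b
  exact ⟨_, _, φ, hio, hsc, hφ, T.isMorseOrder_ioLe.isPathDMFallCrit hio hφ,
    T.isMorseOrder_scLe.isPathDMFallCrit hsc hφ,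
    ⟨_, T.isMorseOrder_ioLe.inducedMlPath hio hφ⟩,
    ⟨_, T.isMorseOrder_scLe.inducedMlPath hsc hφ⟩⟩
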